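/- arXiv:1504.05544 — 3 statements merged into one kernel-verified Lean document; each statement's English description precedes it below -/
import Mathlib

section
/- Every divisor on a finite connected graph G is linearly equivalent to a unique v-reduced divisor, for any fixed vertex v. -/
set_option linter.unusedSectionVars false
set_option linter.unusedVariables false
set_option maxHeartbeats 1000000


namespace ChipFiring

open Finset

variable {V E : Type} [Fintype V] [DecidableEq V] [Fintype E] [DecidableEq E]

/-- The number of edges between the vertices `v` and `w` in the multigraph with
edge set `E` and endpoint maps `fst`, `snd`. -/
def mult (fst snd : E → V) (v w : V) : ℕ :=
  (univ.filter fun e => (fst e = v ∧ snd e = w) ∨ (fst e = w ∧ snd e = v)).card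

/-- The valence of a vertex: the number of edge-endpoints at it. -/
def valence (fst snd : E → V) (v : V) : ℕ := ∑ w, mult fst snd v w

/-- The degree of a divisor `D : V → ℤ`. -/
def deg (D : V → ℤ) : ℤ := ∑ v, D v

/-- The graph Laplacian applied to `f : V → ℤ`; this is the principal divisor `div f`,
with `div f (v) = Σ_{w adjacent to v} (f v - f w)` counted with edge multiplicity. -/
def lap (fst snd : E → V) (f : V → ℤ) : V → ℤ :=
  fun v => ∑ w, (mult fst snd v w : ℤ) * (f v - f w)

/-- Two divisors are linearly equivalent if they differ by a principal divisor. -/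
def LinEquiv (fst snd : E → V) (D D' : V → ℤ) : Prop :=
  ∃ f : V → ℤ, D - D' = lap fst snd f

/-- A divisor is effective if all its coefficients are nonnegative. -/
def Effective (D : V → ℤ) : Prop := ∀ v, 0 ≤ D v

/-- Adjacency: there is an edge between `v` and `w`. -/
def Adj (fst snd : E → V) (v w : V) : Prop :=
  ∃ e, (fst e = v ∧ snd e = w) ∨ (fst e = w ∧ snd e = v)

/-- The multigraph is connected. -/
def Connected (fst snd : E → V) : Prop :=
  ∀ v w : V, Relation.ReflTransGen (Adj fst snd) v w

/-- The multigraph has no loop edges. -/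
def Loopless (fst snd : E → V) : Prop := ∀ e, fst e ≠ snd e

/-- The chip-firing move at a vertex `v`. -/
def fire (fst snd : E → V) (v : V) (D : V → ℤ) : V → ℤ :=
  fun w => if w = v then D v - (valence fst snd v : ℤ) else D w + (mult fst snd v w : ℤ)

/-- `D` has rank at least `r`: subtracting any effective divisor of degree `r`
leaves a divisor linearly equivalent to an effective one. -/
def rankGe (fst snd : E → V) (D : V → ℤ) (r : ℕ) : Prop :=
  ∀ Ediv : V → ℤ, Effective Ediv → deg Ediv = (r : ℤ) →
    ∃ D', Effective D' ∧ LinEquiv fst snd (D - Ediv) D'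

/-- The Baker–Norine rank of a divisor: `-1` if `D` is not equivalent to an effective
divisor, and otherwise the largest `r ≥ 0` such that `rankGe` holds. -/
noncomputable def divRank (fst snd : E → V) (D : V → ℤ) : ℤ :=
  sSup {r : ℤ | r = -1 ∨ (0 ≤ r ∧ rankGe fst snd D r.toNat)}

/-- The canonical divisor `K_G = Σ_v (val v - 2) v`. -/
def canonical (fst snd : E → V) : V → ℤ := fun v => (valence fst snd v : ℤ) - 2

/-- The genus (first Betti number) `|E| - |V| + 1` of the multigraph. -/
def genus (V E : Type) [Fintype V] [Fintype E] : ℤ :=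
  (Fintype.card E : ℤ) - (Fintype.card V : ℤ) + 1

/-- The Laplacian as an additive group homomorphism. -/
def lapHom (fst snd : E → V) : (V → ℤ) →+ (V → ℤ) where
  toFun := lap fst snd
  map_zero' := by funext v; simp [lap]
  map_add' f g := by
    funext v
    simp only [lap, Pi.add_apply]
    rw [← Finset.sum_add_distrib]
    exact Finset.sum_congr rfl fun w _ => by ring

/-- The group of divisors of degree zero. -/
def Div0 (V : Type) [Fintype V] : AddSubgroup (V → ℤ) where
  carrier := {D | deg D = 0}
  zero_mem' := by simp [deg]
  add_mem' := by
    intro a b ha hb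
    have h : deg (a + b) = deg a + deg b := by
      simp [deg, Finset.sum_add_distrib]
    simp only [Set.mem_setOf_eq] at *
    omega
  neg_mem' := by
    intro a ha
    have h : deg (-a) = -deg a := by
      simp [deg]
    simp only [Set.mem_setOf_eq] at *
    omega

/-- The group of principal divisors: the image of the graph Laplacian. -/
def Prin (fst snd : E → V) : AddSubgroup (V → ℤ) := (lapHom fst snd).range

/-- The Jacobian (sandpile group) `Div⁰(G)/Prin(G)`. -/
abbrev Jac (fst snd : E → V) : Type _ :=
  Div0 V ⧸ (Prin fst snd).addSubgroupOf (Div0 V)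

/-- The number of edges from `w` to vertices outside `A`. -/
def outdeg (fst snd : E → V) (A : Finset V) (w : V) : ℕ :=
  (univ.filter fun e => (fst e = w ∧ snd e ∉ A) ∨ (snd e = w ∧ fst e ∉ A)).card

/-- `D` is `v`-reduced. -/
def Reduced (fst snd : E → V) (v : V) (D : V → ℤ) : Prop :=
  (∀ w, w ≠ v → 0 ≤ D w) ∧
    ∀ A : Finset V, A.Nonempty → v ∉ A → ∃ w ∈ A, D w < (outdeg fst snd A w : ℤ)

def lapR (R : Type) [CommRing R] (fst snd : E → V) (f : V → R) : V → R :=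
  fun v => ∑ w, (mult fst snd v w : R) * (f v - f w)

lemma lap_eq_lapR (fst snd : E → V) (f : V → ℤ) : lap fst snd f = lapR ℤ fst snd f := rfl


section Aux
variable (fst snd : E → V)

lemma mult_comm' (a b : V) : mult fst snd a b = mult fst snd b a := by
  unfold mult
  congr 1
  exact Finset.filter_congr (fun e _ => by tauto)

lemma one_le_mult {a b : V} (h : Adj fst snd a b) : 1 ≤ mult fst snd a b := by
  obtain ⟨e, he⟩ := h
  exact Finset.card_pos.mpr ⟨e, Finset.mem_filter.mpr ⟨mem_univ e, he⟩⟩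

lemma exists_cross (hc : Connected fst snd) (A : Finset V) (hA : A.Nonempty)
    {b : V} (hb : b ∉ A) : ∃ w ∈ A, ∃ u, u ∉ A ∧ Adj fst snd w u := by
  obtain ⟨a, ha⟩ := hA
  have key : ∀ x y : V, Relation.ReflTransGen (Adj fst snd) x y → x ∈ A → y ∉ A →
      ∃ w ∈ A, ∃ u, u ∉ A ∧ Adj fst snd w u := by
    intro x y h
    induction h with
    | refl => intro hx hy; exact absurd hx hy
    | @tail c d hxc hadj ih =>
      intro hx hy
      by_cases hcA : c ∈ A
      · exact ⟨c, hcA, d, hy, hadj⟩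
      · exact ih hx hcA
  exact key a b (hc a b) ha hb

section Ring
variable {R : Type} [CommRing R] [LinearOrder R] [IsStrictOrderedRing R]

lemma lapR_neg (f : V → R) : lapR R fst snd (-f) = -(lapR R fst snd f) := by
  funext u
  simp only [lapR, Pi.neg_apply]
  rw [← Finset.sum_neg_distrib]
  exact sum_congr rfl fun w _ => by ring

lemma lapR_sub (f g : V → R) :
    lapR R fst snd (f - g) = lapR R fst snd f - lapR R fst snd g := by
  funext u
  simp only [lapR, Pi.sub_apply]
  rw [← Finset.sum_sub_distrib]
  exact sum_congr rfl fun w _ => by ring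

lemma lapR_const_mul (c : R) (f : V → R) (u : V) :
    lapR R fst snd (fun w => c * f w) u = c * lapR R fst snd f u := by
  simp only [lapR]
  rw [Finset.mul_sum]
  exact sum_congr rfl fun w _ => by ring

lemma sum_mul_lapR (f g : V → R) :
    ∑ w, g w * lapR R fst snd f w = ∑ w, f w * lapR R fst snd g w := by
  have key : ∀ a b : V → R, ∑ w, ∑ u, (mult fst snd w u : R) * (a w * b u)
      = ∑ w, ∑ u, (mult fst snd w u : R) * (b w * a u) := by
    intro a b
    rw [Finset.sum_comm]
    exact sum_congr rfl fun w _ => sum_congr rfl fun u _ => by rw [mult_comm']; ring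
  have expand : ∀ a b : V → R, ∑ w, b w * lapR R fst snd a w
      = (∑ w, ∑ u, (mult fst snd w u : R) * (b w * a w))
        - ∑ w, ∑ u, (mult fst snd w u : R) * (b w * a u) := by
    intro a b
    rw [← Finset.sum_sub_distrib]
    refine sum_congr rfl fun w _ => ?_
    rw [lapR, Finset.mul_sum, ← Finset.sum_sub_distrib]
    exact sum_congr rfl fun u _ => by ring
  rw [expand, expand, key f g]
  congr 1
  exact sum_congr rfl fun w _ => sum_congr rfl fun u _ => by ring

lemma sum_lapR_cut (f : V → R) (A : Finset V) :
    ∑ w ∈ A, lapR R fst snd f w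
      = ∑ w ∈ A, ∑ u ∈ univ.filter (· ∉ A), (mult fst snd w u : R) * (f w - f u) := by
  have hsplit : ∀ w, lapR R fst snd f w
      = (∑ u ∈ A, (mult fst snd w u : R) * (f w - f u))
        + ∑ u ∈ univ.filter (· ∉ A), (mult fst snd w u : R) * (f w - f u) := by
    intro w
    have : (univ.filter (· ∈ A)) = A := by ext x; simp
    rw [lapR, ← Finset.sum_filter_add_sum_filter_not univ (· ∈ A), this]
  have hzero : ∑ w ∈ A, ∑ u ∈ A, (mult fst snd w u : R) * (f w - f u) = 0 := by
    have hswap : (∑ w ∈ A, ∑ u ∈ A, (mult fst snd w u : R) * (f w - f u))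
        = -∑ w ∈ A, ∑ u ∈ A, (mult fst snd w u : R) * (f w - f u) := by
      conv_lhs => rw [Finset.sum_comm]
      rw [← Finset.sum_neg_distrib]
      refine sum_congr rfl fun w _ => ?_
      rw [← Finset.sum_neg_distrib]
      exact sum_congr rfl fun u _ => by rw [mult_comm']; ring
    have := hswap
    linarith [hswap]
  calc ∑ w ∈ A, lapR R fst snd f w
      = ∑ w ∈ A, ((∑ u ∈ A, (mult fst snd w u : R) * (f w - f u))
        + ∑ u ∈ univ.filter (· ∉ A), (mult fst snd w u : R) * (f w - f u)) :=
        sum_congr rfl fun w _ => hsplit w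
    _ = _ := by rw [Finset.sum_add_distrib, hzero, zero_add]

lemma min_at_v (hc : Connected fst snd) (v : V) (f : V → R)
    (h : ∀ u, u ≠ v → 0 ≤ lapR R fst snd f u) : ∀ u, f v ≤ f u := by
  classical
  set A : Finset V := univ.filter (fun u => ∀ u', f u ≤ f u') with hA
  have hAne : A.Nonempty := by
    obtain ⟨a, _, ha⟩ := Finset.exists_min_image univ f ⟨v, mem_univ v⟩
    exact ⟨a, mem_filter.mpr ⟨mem_univ a, fun u' => ha u' (mem_univ u')⟩⟩
  by_cases hv : v ∈ A
  · exact (mem_filter.mp hv).2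
  · exfalso
    obtain ⟨w0, hw0A, u0, hu0A, hadj⟩ := exists_cross fst snd hc A hAne hv
    have hw0min : ∀ u', f w0 ≤ f u' := (mem_filter.mp hw0A).2
    -- strict: f w0 < f u0
    have hstrict : f w0 < f u0 := by
      have : ¬ ∀ u', f u0 ≤ f u' := by
        intro hall
        exact hu0A (mem_filter.mpr ⟨mem_univ u0, hall⟩)
      push_neg at this
      obtain ⟨u', hu'⟩ := this
      exact lt_of_le_of_lt (hw0min u') hu'
    have hS0 : 0 ≤ ∑ w ∈ A, lapR R fst snd f w := by
      refine Finset.sum_nonneg fun w hwA => h w fun hh => hv (hh ▸ hwA)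
    rw [sum_lapR_cut] at hS0
    -- inner sums are nonpositive; the w0-sum is negative
    set T : V → R := fun w => ∑ u ∈ univ.filter (· ∉ A), (mult fst snd w u : R) * (f w - f u)
      with hT
    have hTnonpos : ∀ w ∈ A, T w ≤ 0 := by
      intro w hwA
      refine Finset.sum_nonpos fun u hu => ?_
      have : f w ≤ f u := (mem_filter.mp hwA).2 u
      exact mul_nonpos_of_nonneg_of_nonpos (by positivity) (by linarith)
    have hu0mem : u0 ∈ univ.filter (· ∉ A) := mem_filter.mpr ⟨mem_univ u0, hu0A⟩
    have hTw0 : T w0 < 0 := by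
      have hterm : (mult fst snd w0 u0 : R) * (f w0 - f u0) < 0 := by
        have h1 : (1 : R) ≤ (mult fst snd w0 u0 : R) := by
          exact_mod_cast one_le_mult fst snd hadj
        have h2 : f w0 - f u0 < 0 := by linarith
        nlinarith
      have hrest : ∑ u ∈ (univ.filter (· ∉ A)).erase u0,
          (mult fst snd w0 u : R) * (f w0 - f u) ≤ 0 := by
        refine Finset.sum_nonpos fun u hu => ?_
        have : f w0 ≤ f u := hw0min u
        exact mul_nonpos_of_nonneg_of_nonpos (by positivity) (by linarith)
      have hTeq : T w0 = (mult fst snd w0 u0 : R) * (f w0 - f u0)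
          + ∑ u ∈ (univ.filter (· ∉ A)).erase u0, (mult fst snd w0 u : R) * (f w0 - f u) :=
        (Finset.add_sum_erase _ (fun u => (mult fst snd w0 u : R) * (f w0 - f u)) hu0mem).symm
      linarith [hTeq]
    have hsum : ∑ w ∈ A, T w < 0 := by
      have hrest : ∑ w ∈ A.erase w0, T w ≤ 0 :=
        Finset.sum_nonpos fun w hw => hTnonpos w (Finset.mem_of_mem_erase hw)
      have hAeq : ∑ w ∈ A, T w = T w0 + ∑ w ∈ A.erase w0, T w :=
        (Finset.add_sum_erase _ T hw0A).symm
      linarith [hAeq]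
    exact absurd hS0 (not_le.mpr hsum)

lemma max_at_v (hc : Connected fst snd) (v : V) (f : V → R)
    (h : ∀ u, u ≠ v → lapR R fst snd f u ≤ 0) : ∀ u, f u ≤ f v := by
  intro u
  have := min_at_v fst snd hc v (-f) (fun u hu => by
    rw [lapR_neg]; simp only [Pi.neg_apply]; linarith [h u hu]) u
  simp only [Pi.neg_apply] at this
  linarith

end Ring

lemma outdeg_eq_sum (A : Finset V) (w : V) (hw : w ∈ A) :
    outdeg fst snd A w = ∑ u ∈ univ.filter (· ∉ A), mult fst snd w u := by
  classical
  set other : E → V := fun e => if fst e = w then snd e else fst e with hother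
  have hmap : ∀ e ∈ univ.filter (fun e => (fst e = w ∧ snd e ∉ A) ∨ (snd e = w ∧ fst e ∉ A)),
      other e ∈ univ.filter (· ∉ A) := by
    intro e he
    rw [mem_filter] at he ⊢
    refine ⟨mem_univ _, ?_⟩
    rcases he.2 with ⟨h1, h2⟩ | ⟨h1, h2⟩
    · simpa [other, h1] using h2
    · have hne : fst e ≠ w := fun hh => h2 (hh ▸ hw)
      simpa [other, hne] using h2
  rw [outdeg, Finset.card_eq_sum_card_fiberwise hmap]
  refine sum_congr rfl fun u hu => ?_
  have huA : u ∉ A := (mem_filter.mp hu).2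
  have hwu : w ≠ u := fun hh => huA (hh ▸ hw)
  rw [mult, Finset.filter_filter]
  congr 1
  apply Finset.filter_congr
  intro e _
  constructor
  · rintro ⟨⟨h1, h2⟩ | ⟨h1, h2⟩, h3⟩
    · left; exact ⟨h1, by simpa [other, h1] using h3⟩
    · have hne : fst e ≠ w := fun hh => h2 (hh ▸ hw)
      right; exact ⟨by simpa [other, hne] using h3, h1⟩
  · rintro (⟨h1, h2⟩ | ⟨h1, h2⟩)
    · exact ⟨Or.inl ⟨h1, h2 ▸ huA⟩, by simp only [other]; rw [if_pos h1, h2]⟩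
    · have hne : fst e ≠ w := fun hh => hwu (h1 ▸ hh).symm
      exact ⟨Or.inr ⟨h2, h1 ▸ huA⟩, by simp only [other]; rw [if_neg hne, h1]⟩

lemma reduced_aux (hc : Connected fst snd) (v : V) (f D1 D2 : V → ℤ)
    (h2 : ∀ w, w ≠ v → 0 ≤ D2 w)
    (h1 : ∀ A : Finset V, A.Nonempty → v ∉ A → ∃ w ∈ A, D1 w < (outdeg fst snd A w : ℤ))
    (heq : ∀ w, D1 w = D2 w + lap fst snd f w) :
    ∀ u, f u ≤ f v := by
  classical
  set A : Finset V := univ.filter (fun w => ∀ u, f u ≤ f w) with hA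
  have hAne : A.Nonempty := by
    obtain ⟨a, _, ha⟩ := Finset.exists_max_image univ f ⟨v, mem_univ v⟩
    exact ⟨a, mem_filter.mpr ⟨mem_univ a, fun u => ha u (mem_univ u)⟩⟩
  by_cases hv : v ∈ A
  · exact (mem_filter.mp hv).2
  · exfalso
    obtain ⟨w, hwA, hlt⟩ := h1 A hAne hv
    have hwmax : ∀ u, f u ≤ f w := (mem_filter.mp hwA).2
    have hwv : w ≠ v := fun hh => hv (hh ▸ hwA)
    have hbound : (outdeg fst snd A w : ℤ) ≤ lap fst snd f w := by
      rw [outdeg_eq_sum fst snd A w hwA]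
      have step1 : ((∑ u ∈ univ.filter (· ∉ A), mult fst snd w u : ℕ) : ℤ)
          = ∑ u ∈ univ.filter (· ∉ A), ((mult fst snd w u : ℕ) : ℤ) := by
        push_cast; ring
      rw [step1]
      have step2 : ∑ u ∈ univ.filter (· ∉ A), ((mult fst snd w u : ℕ) : ℤ)
          ≤ ∑ u ∈ univ.filter (· ∉ A), (mult fst snd w u : ℤ) * (f w - f u) := by
        refine Finset.sum_le_sum fun u hu => ?_
        have huA : u ∉ A := (mem_filter.mp hu).2
        have : ¬ ∀ u', f u' ≤ f u := fun hall =>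
          huA (mem_filter.mpr ⟨mem_univ u, hall⟩)
        push_neg at this
        obtain ⟨u', hu'⟩ := this
        have h1' : 1 ≤ f w - f u := by
          have := hwmax u'
          omega
        nlinarith [Int.natCast_nonneg (mult fst snd w u)]
      refine le_trans step2 ?_
      refine le_trans (Finset.sum_le_sum_of_subset_of_nonneg (Finset.filter_subset _ _) ?_) ?_
      · intro u _ hu
        have huA : u ∈ A := by
          by_contra hna
          exact hu (mem_filter.mpr ⟨mem_univ u, hna⟩)
        have : f u ≤ f w := hwmax u
        have := Int.natCast_nonneg (mult fst snd w u)
        nlinarith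
      · exact le_of_eq rfl
    have := heq w
    have := h2 w hwv
    omega

lemma lap_sub' (f g : V → ℤ) :
    lap fst snd (f - g) = lap fst snd f - lap fst snd g := lapR_sub fst snd f g

lemma reduced_unique (hc : Connected fst snd) (v : V) (D1 D2 : V → ℤ)
    (hr1 : Reduced fst snd v D1) (hr2 : Reduced fst snd v D2)
    (hle : LinEquiv fst snd D1 D2) : D1 = D2 := by
  obtain ⟨f, hf⟩ := hle
  have heq : ∀ w, D1 w = D2 w + lap fst snd f w := by
    intro w
    have := congrFun hf w
    simp only [Pi.sub_apply] at this
    omega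
  have hmax := reduced_aux fst snd hc v f D1 D2 hr2.1 hr1.2 heq
  have heq' : ∀ w, D2 w = D1 w + lap fst snd (-f) w := by
    intro w
    have h1 := congrFun (lapR_neg fst snd f) w
    rw [← lap_eq_lapR, ← lap_eq_lapR] at h1
    simp only [Pi.neg_apply] at h1
    have := heq w
    omega
  have hmin := reduced_aux fst snd hc v (-f) D2 D1 hr1.1 hr2.2 heq'
  have hconst : ∀ u, f u = f v := by
    intro u
    have h1 := hmax u
    have h2 := hmin u
    simp only [Pi.neg_apply] at h2
    omega
  have hlap0 : ∀ w, lap fst snd f w = 0 := by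
    intro w
    rw [lap]
    rw [Finset.sum_eq_zero]
    intro u _
    rw [hconst w, hconst u]
    ring
  funext w
  have := heq w
  rw [hlap0 w] at this
  omega

lemma lapR_add (f g : V → ℚ) :
    lapR ℚ fst snd (f + g) = lapR ℚ fst snd f + lapR ℚ fst snd g := by
  funext u
  simp only [lapR, Pi.add_apply]
  rw [← Finset.sum_add_distrib]
  exact sum_congr rfl fun w _ => by ring

lemma rat_clear (q : ℚ) (N : ℕ) (h : q.den ∣ N) : ∃ z : ℤ, (z : ℚ) = (N : ℚ) * q := by
  obtain ⟨k, hk⟩ := h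
  refine ⟨(k : ℤ) * q.num, ?_⟩
  have hden : ((q.den : ℚ)) * q = (q.num : ℚ) := by
    have := Rat.num_div_den q
    exact Rat.den_mul_eq_num q
  push_cast
  rw [hk]
  push_cast
  rw [mul_right_comm, hden, mul_comm]

lemma exists_potential (hc : Connected fst snd) (v : V) :
    ∃ g : V → ℤ, ∀ u, u ≠ v → 1 ≤ lap fst snd g u := by
  classical
  -- the modified Laplacian over ℚ
  let T : (V → ℚ) →ₗ[ℚ] (V → ℚ) :=
    { toFun := fun x u => if u = v then x v else lapR ℚ fst snd x u
      map_add' := by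
        intro x y
        funext u
        by_cases hu : u = v
        · simp [hu]
        · simp [if_neg hu, lapR_add]
      map_smul' := by
        intro c x
        funext u
        by_cases hu : u = v
        · simp [hu]
        · simp only [RingHom.id_apply, Pi.smul_apply, smul_eq_mul, if_neg hu]
          have : (c • x) = fun w => c * x w := by funext w; simp [smul_eq_mul]
          rw [this, lapR_const_mul] }
  have hTinj : Function.Injective T := by
    rw [injective_iff_map_eq_zero]
    intro x hx
    have hxv : x v = 0 := by
      have := congrFun hx v
      simpa [T] using this
    have hlap0 : ∀ u, u ≠ v → lapR ℚ fst snd x u = 0 := by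
      intro u hu
      have := congrFun hx u
      simpa [T, if_neg hu] using this
    have hmin := min_at_v fst snd hc v x (fun u hu => le_of_eq (hlap0 u hu).symm)
    have hmax := max_at_v fst snd hc v x (fun u hu => le_of_eq (hlap0 u hu))
    funext u
    have := hmin u
    have := hmax u
    have : x u = x v := le_antisymm (hmax u) (hmin u)
    rw [this, hxv]
    rfl
  have hTsurj : Function.Surjective T := LinearMap.injective_iff_surjective.mp hTinj
  obtain ⟨x, hx⟩ := hTsurj (fun u => if u = v then 0 else 1)
  have hxlap : ∀ u, u ≠ v → lapR ℚ fst snd x u = 1 := by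
    intro u hu
    have := congrFun hx u
    simpa [T, if_neg hu] using this
  set N : ℕ := ∏ u, (x u).den with hN
  have hNpos : 1 ≤ N := by
    refine Finset.one_le_prod' fun u _ => (x u).pos
  have hdvd : ∀ u, (x u).den ∣ N := fun u =>
    Finset.dvd_prod_of_mem (fun u => (x u).den) (mem_univ u)
  have hchoice : ∀ u, ∃ z : ℤ, (z : ℚ) = (N : ℚ) * x u := fun u => rat_clear (x u) N (hdvd u)
  choose g hg using hchoice
  refine ⟨g, fun u hu => ?_⟩
  have hcast : ((lap fst snd g u : ℤ) : ℚ) = lapR ℚ fst snd (fun w => ((g w : ℤ) : ℚ)) u := by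
    rw [lap, lapR]
    push_cast
    ring
  have hkey : ((lap fst snd g u : ℤ) : ℚ) = (N : ℚ) := by
    rw [hcast]
    have : (fun w => ((g w : ℤ) : ℚ)) = fun w => (N : ℚ) * x w := by
      funext w; rw [hg w]
    rw [this, lapR_const_mul, hxlap u hu, mul_one]
  have : (lap fst snd g u : ℤ) = (N : ℤ) := by exact_mod_cast hkey
  rw [this]
  exact_mod_cast hNpos

lemma lap_neg' (f : V → ℤ) (w : V) : lap fst snd (-f) w = -(lap fst snd f w) := by
  have := congrFun (lapR_neg (R := ℤ) fst snd f) w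
  rw [← lap_eq_lapR, ← lap_eq_lapR] at this
  simpa using this

end Aux

theorem exists_unique_reduced
    (fst snd : E → V) (hl : Loopless fst snd) (hc : Connected fst snd)
    (D : V → ℤ) (v : V) :
    ∃! D' : V → ℤ, LinEquiv fst snd D D' ∧ Reduced fst snd v D' := by
  classical
  obtain ⟨g0, hg0⟩ := exists_potential fst snd hc v
  set g : V → ℤ := fun u => g0 u - g0 v with hgdef
  have hglap : ∀ w, lap fst snd g w = lap fst snd g0 w := by
    intro w
    rw [lap, lap]
    refine sum_congr rfl fun u _ => ?_
    simp only [hgdef]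
    ring
  have hglap1 : ∀ u, u ≠ v → 1 ≤ lap fst snd g u := fun u hu => by
    rw [hglap u]; exact hg0 u hu
  have hgv : g v = 0 := by simp [hgdef]
  have hgmin : ∀ u, 0 ≤ g u := by
    intro u
    have h := min_at_v fst snd hc v g (fun u hu => by
      rw [← lap_eq_lapR]; linarith [hglap1 u hu]) u
    omega
  set W : (V → ℤ) → ℤ := fun D' => ∑ w, g w * D' w with hW
  have hWnonneg : ∀ D' : V → ℤ, (∀ w, w ≠ v → 0 ≤ D' w) → 0 ≤ W D' := by
    intro D' hD'
    refine Finset.sum_nonneg fun w _ => ?_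
    by_cases hw : w = v
    · rw [hw, hgv]; simp
    · exact mul_nonneg (hgmin w) (hD' w hw)
  set M : ℤ := ∑ w, |D w| with hM
  have hMD : ∀ u, 0 ≤ D u + M := by
    intro u
    have h1 : |D u| ≤ M := Finset.single_le_sum (fun w _ => abs_nonneg (D w)) (mem_univ u)
    have h2 := neg_abs_le (D u)
    omega
  have hM0 : 0 ≤ M := Finset.sum_nonneg fun w _ => abs_nonneg _
  set f0 : V → ℤ := fun u => M * g u with hf0
  have hS0 : ∀ w, w ≠ v → 0 ≤ D w + lap fst snd f0 w := by
    intro w hw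
    have h1 : lap fst snd f0 w = M * lap fst snd g w := by
      rw [lap_eq_lapR, lap_eq_lapR]
      exact lapR_const_mul fst snd M g w
    have h2 : M ≤ M * lap fst snd g w := le_mul_of_one_le_right hM0 (hglap1 w hw)
    have h3 := hMD w
    omega
  set P : ℕ → Prop := fun n => ∃ f : V → ℤ, (∀ w, w ≠ v → 0 ≤ D w + lap fst snd f w)
      ∧ W (fun w => D w + lap fst snd f w) = (n : ℤ) with hPdef
  haveI : DecidablePred P := fun _ => Classical.dec _
  have hPex : ∃ n, P n := by
    refine ⟨(W (fun w => D w + lap fst snd f0 w)).toNat, f0, hS0, ?_⟩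
    rw [Int.toNat_of_nonneg (hWnonneg _ hS0)]
  obtain ⟨f1, hf1pos, hf1W⟩ := Nat.find_spec hPex
  set D' : V → ℤ := fun w => D w + lap fst snd f1 w with hD'def
  have hlin : LinEquiv fst snd D D' := by
    refine ⟨-f1, ?_⟩
    funext w
    have h1 := lap_neg' fst snd f1 w
    simp only [Pi.sub_apply, hD'def]
    omega
  have hred2 : ∀ A : Finset V, A.Nonempty → v ∉ A → ∃ w ∈ A, D' w < (outdeg fst snd A w : ℤ) := by
    intro A hAne hvA
    by_contra hcon
    push_neg at hcon
    set χ : V → ℤ := fun u => if u ∈ A then 1 else 0 with hχ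
    set f2 : V → ℤ := f1 - χ with hf2
    have hlapf2 : ∀ w, lap fst snd f2 w = lap fst snd f1 w - lap fst snd χ w := by
      intro w
      rw [hf2, lap_sub' fst snd f1 χ]
      simp
    have hχin : ∀ w ∈ A, lap fst snd χ w = (outdeg fst snd A w : ℤ) := by
      intro w hwA
      rw [outdeg_eq_sum fst snd A w hwA, lap]
      push_cast
      rw [Finset.sum_filter]
      refine sum_congr rfl fun u _ => ?_
      by_cases hu : u ∈ A
      · simp [hχ, hwA, hu]
      · simp [hχ, hwA, hu]
    have hχout : ∀ w, w ∉ A → lap fst snd χ w ≤ 0 := by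
      intro w hwA
      rw [lap]
      refine Finset.sum_nonpos fun u _ => ?_
      by_cases hu : u ∈ A
      · simp only [hχ, if_pos hu, if_neg hwA]
        nlinarith [Int.natCast_nonneg (mult fst snd w u)]
      · simp [hχ, hwA, hu]
    have hf2pos : ∀ w, w ≠ v → 0 ≤ D w + lap fst snd f2 w := by
      intro w hw
      rw [hlapf2]
      by_cases hwA : w ∈ A
      · have h1 := hcon w hwA
        have h2 := hχin w hwA
        simp only [hD'def] at h1
        omega
      · have h1 := hχout w hwA
        have h2 := hf1pos w hw
        omega
    have hswap : ∑ w, g w * lap fst snd χ w = ∑ w, χ w * lap fst snd g w := by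
      have h := sum_mul_lapR (R := ℤ) fst snd χ g
      simpa [← lap_eq_lapR] using h
    have hposA : 1 ≤ ∑ w, χ w * lap fst snd g w := by
      have h1 : ∑ w, χ w * lap fst snd g w = ∑ w ∈ univ.filter (· ∈ A), lap fst snd g w := by
        rw [Finset.sum_filter]
        refine sum_congr rfl fun w _ => ?_
        by_cases hw : w ∈ A
        · simp [hχ, hw]
        · simp [hχ, hw]
      have h2 : (univ.filter (· ∈ A)) = A := by ext x; simp
      have h3 : ∑ w ∈ A, (1 : ℤ) ≤ ∑ w ∈ A, lap fst snd g w :=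
        Finset.sum_le_sum fun w hw => hglap1 w (fun hh => hvA (hh ▸ hw))
      have h4 : ∑ w ∈ A, (1 : ℤ) = (A.card : ℤ) := by simp
      have h5 : 1 ≤ A.card := hAne.card_pos
      rw [h1, h2]
      have h6 : (1 : ℤ) ≤ (A.card : ℤ) := by exact_mod_cast h5
      omega
    have hWdiff : W (fun w => D w + lap fst snd f2 w)
        = W (fun w => D w + lap fst snd f1 w) - ∑ w, g w * lap fst snd χ w := by
      simp only [hW]
      rw [← Finset.sum_sub_distrib]
      refine sum_congr rfl fun w _ => ?_
      rw [hlapf2 w]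
      ring
    rw [← hD'def] at hWdiff
    have hnn2 := hWnonneg _ hf2pos
    have htn : ((W (fun w => D w + lap fst snd f2 w)).toNat : ℤ)
        = W (fun w => D w + lap fst snd f2 w) := Int.toNat_of_nonneg hnn2
    have hlt : (W (fun w => D w + lap fst snd f2 w)).toNat < Nat.find hPex := by
      omega
    exact Nat.find_min hPex hlt ⟨f2, hf2pos, htn.symm⟩
  have hred : Reduced fst snd v D' := ⟨fun w hw => hf1pos w hw, hred2⟩
  refine ⟨D', ⟨hlin, hred⟩, ?_⟩
  rintro D2 ⟨⟨f', hf'⟩, hr2⟩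
  obtain ⟨fa, hfa⟩ := hlin
  refine reduced_unique fst snd hc v D2 D' hr2 hred ⟨fa - f', ?_⟩
  rw [lap_sub' fst snd fa f', ← hfa, ← hf']
  abel


end ChipFiring
end

section
/- If D is a v-reduced divisor on a finite connected graph and D has non-negative rank, then D(v) ≥ r(D). -/
namespace ChipFiring

open Finset

variable {V E : Type} [Fintype V] [DecidableEq V] [Fintype E] [DecidableEq E]

lemma sum_mult_compl (fst snd : E → V) (hl : Loopless fst snd) (A : Finset V) (w : V) :
    ∑ u ∈ Aᶜ, mult fst snd w u = outdeg fst snd A w := by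
  unfold mult outdeg
  simp only [Finset.card_filter]
  rw [Finset.sum_comm]
  refine Finset.sum_congr rfl fun e _ => ?_
  have hne := hl e
  by_cases h1 : fst e = w
  · by_cases h2 : snd e ∈ A
    · rw [if_neg]
      · refine Finset.sum_eq_zero fun u hu => ?_
        rw [if_neg]
        rintro (⟨_, rfl⟩ | ⟨rfl, h4⟩)
        · exact (Finset.mem_compl.mp hu) h2
        · exact hne (h1.trans h4.symm)
      · rintro (⟨_, h3⟩ | ⟨h3, _⟩)
        · exact h3 h2
        · exact hne (h1.trans h3.symm)
    · rw [if_pos (Or.inl ⟨h1, h2⟩)]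
      rw [Finset.sum_eq_single (snd e)]
      · rw [if_pos (Or.inl ⟨h1, rfl⟩)]
      · intro u hu hus
        rw [if_neg]
        rintro (⟨_, h4⟩ | ⟨rfl, h4⟩)
        · exact hus h4.symm
        · exact hne (h1.trans h4.symm)
      · intro h; exact absurd (Finset.mem_compl.mpr h2) h
  · by_cases h2 : snd e = w
    · by_cases h3 : fst e ∈ A
      · rw [if_neg]
        · refine Finset.sum_eq_zero fun u hu => ?_
          rw [if_neg]
          rintro (⟨h4, _⟩ | ⟨rfl, _⟩)
          · exact h1 h4
          · exact (Finset.mem_compl.mp hu) h3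
        · rintro (⟨h4, _⟩ | ⟨_, h4⟩)
          · exact h1 h4
          · exact h4 h3
      · rw [if_pos (Or.inr ⟨h2, h3⟩)]
        rw [Finset.sum_eq_single (fst e)]
        · rw [if_pos (Or.inr ⟨rfl, h2⟩)]
        · intro u hu hus
          rw [if_neg]
          rintro (⟨h4, _⟩ | ⟨h4, _⟩)
          · exact h1 h4
          · exact hus h4.symm
        · intro h; exact absurd (Finset.mem_compl.mpr h3) h
    · rw [if_neg, Finset.sum_eq_zero]
      · intro u _
        rw [if_neg]
        rintro (⟨h4, _⟩ | ⟨_, h4⟩)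
        · exact h1 h4
        · exact h2 h4
      · rintro (⟨h4, _⟩ | ⟨h4, _⟩)
        · exact h1 h4
        · exact h2 h4

/-- A `v`-reduced divisor equivalent to an effective one is nonnegative at `v`. -/
lemma reduced_nonneg_at (fst snd : E → V) (hl : Loopless fst snd)
    (D : V → ℤ) (v : V) (hred : Reduced fst snd v D)
    (h : ∃ Ed : V → ℤ, Effective Ed ∧ LinEquiv fst snd D Ed) : 0 ≤ D v := by
  obtain ⟨Ed, hEd, f, hf⟩ := h
  have hDval : ∀ w, D w = Ed w + lap fst snd f w := by
    intro w
    have := congrFun hf w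
    simp only [Pi.sub_apply] at this
    omega
  -- maximum of f
  obtain ⟨m, hm, hmax⟩ := Finset.exists_max_image (univ : Finset V) f ⟨v, Finset.mem_univ v⟩
  set A : Finset V := univ.filter fun w => f w = f m with hA
  have hAmem : ∀ w, w ∈ A ↔ f w = f m := by
    intro w; simp [hA]
  by_cases hv : v ∈ A
  · -- lap f v ≥ 0
    have hlap : 0 ≤ lap fst snd f v := by
      unfold lap
      refine Finset.sum_nonneg fun u _ => ?_
      have h1 : f u ≤ f v := by
        rw [(hAmem v).mp hv]; exact hmax u (Finset.mem_univ u)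
      have := Int.natCast_nonneg (mult fst snd v u)
      nlinarith [hEd v]
    have := hEd v
    rw [hDval v]; omega
  · exfalso
    obtain ⟨w, hwA, hw⟩ := hred.2 A ⟨m, (hAmem m).mpr rfl⟩ hv
    have hfw : f w = f m := (hAmem w).mp hwA
    -- lap f w ≥ outdeg A w
    have key : (outdeg fst snd A w : ℤ) ≤ lap fst snd f w := by
      rw [← sum_mult_compl fst snd hl A w]
      unfold lap
      rw [← Finset.sum_compl_add_sum A (fun u => (mult fst snd w u : ℤ) * (f w - f u))]
      push_cast
      have h1 : ∑ u ∈ Aᶜ, (mult fst snd w u : ℤ)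
          ≤ ∑ u ∈ Aᶜ, (mult fst snd w u : ℤ) * (f w - f u) := by
        refine Finset.sum_le_sum fun u hu => ?_
        have hu' : f u ≠ f m := fun h => (Finset.mem_compl.mp hu) ((hAmem u).mpr h)
        have hu2 : f u ≤ f m := hmax u (Finset.mem_univ u)
        have : 1 ≤ f w - f u := by omega
        nlinarith [Int.natCast_nonneg (mult fst snd w u)]
      have h2 : 0 ≤ ∑ u ∈ A, (mult fst snd w u : ℤ) * (f w - f u) := by
        refine Finset.sum_nonneg fun u hu => ?_
        have : f u = f m := (hAmem u).mp hu
        have : f w - f u = 0 := by omega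
        rw [this]; ring_nf; simp
      linarith
    have := hEd w
    rw [hDval w] at hw
    omega

lemma rankGe_le_coeff (fst snd : E → V) (hl : Loopless fst snd)
    (D : V → ℤ) (v : V) (hred : Reduced fst snd v D)
    (r : ℕ) (hr : rankGe fst snd D r) : (r : ℤ) ≤ D v := by
  set Ediv : V → ℤ := fun w => if w = v then (r : ℤ) else 0 with hEdiv
  have hEeff : Effective Ediv := by
    intro w; simp only [hEdiv]; split <;> positivity
  have hEdeg : deg Ediv = (r : ℤ) := by
    simp [deg, hEdiv, Finset.sum_ite_eq']
  obtain ⟨D', hD', hequiv⟩ := hr Ediv hEeff hEdeg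
  have hred' : Reduced fst snd v (D - Ediv) := by
    constructor
    · intro w hw
      have : Ediv w = 0 := by simp [hEdiv, hw]
      simp only [Pi.sub_apply, this, sub_zero]
      exact hred.1 w hw
    · intro A hA hvA
      obtain ⟨w, hwA, hw⟩ := hred.2 A hA hvA
      have hwv : w ≠ v := fun h => hvA (h ▸ hwA)
      have : Ediv w = 0 := by simp [hEdiv, hwv]
      exact ⟨w, hwA, by simp only [Pi.sub_apply, this, sub_zero]; exact hw⟩
  have h1 := reduced_nonneg_at fst snd hl (D - Ediv) v hred' ⟨D', hD', hequiv⟩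
  have h2 : (D - Ediv) v = D v - (r : ℤ) := by
    simp [hEdiv]
  omega

/-- if `D` is `v`-reduced and has non-negative rank, then `D(v) ≥ r(D)`. -/
theorem reduced_coeff_ge_rank
    (fst snd : E → V) (hl : Loopless fst snd) (hc : Connected fst snd)
    (D : V → ℤ) (v : V) (hred : Reduced fst snd v D)
    (hrank : 0 ≤ divRank fst snd D) :
    divRank fst snd D ≤ D v := by
  set S := {r : ℤ | r = -1 ∨ (0 ≤ r ∧ rankGe fst snd D r.toNat)} with hS
  have hne : S.Nonempty := ⟨-1, Or.inl rfl⟩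
  have hbdd : BddAbove S := by
    refine ⟨max (D v) 0, fun r hr => ?_⟩
    rcases hr with rfl | ⟨hr0, hrg⟩
    · omega
    · have := rankGe_le_coeff fst snd hl D v hred r.toNat hrg
      rw [Int.toNat_of_nonneg hr0] at this
      omega
  have hmem : sSup S ∈ S := Int.csSup_mem hne hbdd
  rcases hmem with h | ⟨h0, hrg⟩
  · rw [divRank] at hrank; rw [← hS] at hrank; omega
  · have := rankGe_le_coeff fst snd hl D v hred (sSup S).toNat hrg
    rw [Int.toNat_of_nonneg h0] at this
    rw [divRank, ← hS]
    exact this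

end ChipFiring
end

section
/- Divisor rank is superadditive: if D and E are divisors on a finite graph both having non-negative rank, then r(D + E) ≥ r(D) + r(E). -/
namespace ChipFiring

open Finset

variable {V E : Type} [Fintype V] [DecidableEq V] [Fintype E] [DecidableEq E]

/-- Auxiliary: multiplicities are symmetric. -/
lemma mult_symm' (fst snd : E → V) (v w : V) : mult fst snd v w = mult fst snd w v := by
  unfold mult
  congr 1
  ext e
  simp only [mem_filter, mem_univ, true_and]
  tauto

/-- Auxiliary: the Laplacian of any function has degree zero. -/
lemma deg_lap' (fst snd : E → V) (f : V → ℤ) : deg (lap fst snd f) = 0 := by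
  unfold deg lap
  have h : ∑ v, ∑ w, (mult fst snd v w : ℤ) * (f v - f w)
      = (∑ v, ∑ w, (mult fst snd v w : ℤ) * f v)
        - ∑ v, ∑ w, (mult fst snd v w : ℤ) * f w := by
    rw [← Finset.sum_sub_distrib]
    refine Finset.sum_congr rfl fun v _ => ?_
    rw [← Finset.sum_sub_distrib]
    exact Finset.sum_congr rfl fun w _ => by ring
  rw [h, Finset.sum_comm (s := (univ : Finset V)) (t := (univ : Finset V))
    (f := fun v w => (mult fst snd v w : ℤ) * f w)]
  have h2 : ∑ w, ∑ v, (mult fst snd v w : ℤ) * f w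
      = ∑ w, ∑ v, (mult fst snd w v : ℤ) * f w := by
    refine Finset.sum_congr rfl fun w _ => Finset.sum_congr rfl fun v _ => ?_
    rw [mult_symm']
  rw [h2, sub_self]

lemma deg_add' (A B : V → ℤ) : deg (A + B) = deg A + deg B := by
  simp [deg, Finset.sum_add_distrib]

lemma deg_sub' (A B : V → ℤ) : deg (A - B) = deg A - deg B := by
  simp [deg, Finset.sum_sub_distrib]

lemma deg_effective_nonneg {A : V → ℤ} (h : Effective A) : 0 ≤ deg A :=
  Finset.sum_nonneg fun v _ => h v

/-- If `rankGe D r` holds and `V` is nonempty, then `r ≤ deg D`. -/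
lemma rankGe_le_deg [Nonempty V] (fst snd : E → V) (D : V → ℤ) (r : ℕ)
    (h : rankGe fst snd D r) : (r : ℤ) ≤ deg D := by
  obtain ⟨v0⟩ := ‹Nonempty V›
  set Ediv : V → ℤ := fun w => if w = v0 then (r : ℤ) else 0 with hE
  have hEeff : Effective Ediv := by
    intro v; simp only [hE]; split <;> simp
  have hEdeg : deg Ediv = (r : ℤ) := by
    simp [deg, hE, Finset.sum_ite_eq']
  obtain ⟨D', hD'eff, f, hf⟩ := h Ediv hEeff hEdeg
  have h1 : deg (D - Ediv - D') = 0 := by rw [hf]; exact deg_lap' fst snd f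
  rw [deg_sub', deg_sub', hEdeg] at h1
  have := deg_effective_nonneg hD'eff
  omega

/-- An effective divisor of degree `a + b` splits into effective divisors of
degrees `a` and `b`. -/
lemma split_effective (a : ℕ) : ∀ (b : ℕ) (F : V → ℤ), Effective F →
    deg F = (a : ℤ) + b → ∃ F₁ F₂ : V → ℤ, Effective F₁ ∧ Effective F₂ ∧
      deg F₁ = (a : ℤ) ∧ deg F₂ = (b : ℤ) ∧ F = F₁ + F₂ := by
  induction a with
  | zero =>
    intro b F hF hdeg
    exact ⟨0, F, fun v => le_refl 0, hF, by simp [deg], by simpa using hdeg, by simp⟩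
  | succ n ih =>
    intro b F hF hdeg
    have hpos : ∃ v, 0 < F v := by
      by_contra hcon
      push_neg at hcon
      have : deg F ≤ 0 := Finset.sum_nonpos fun v _ => hcon v
      have : (0:ℤ) < (n:ℤ) + 1 + b := by positivity
      omega
    obtain ⟨v, hv⟩ := hpos
    set δ : V → ℤ := fun w => if w = v then 1 else 0 with hδ
    have hδeff : Effective δ := by intro w; simp only [hδ]; split <;> simp
    have hδdeg : deg δ = 1 := by simp [deg, hδ, Finset.sum_ite_eq']
    have hF'eff : Effective (F - δ) := by
      intro w
      simp only [Pi.sub_apply, hδ]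
      split
      · next h => subst h; omega
      · simpa using hF w
    have hF'deg : deg (F - δ) = (n : ℤ) + b := by
      rw [deg_sub', hδdeg, hdeg]; push_cast; ring
    obtain ⟨F₁, F₂, h1, h2, h3, h4, h5⟩ := ih b (F - δ) hF'eff hF'deg
    refine ⟨F₁ + δ, F₂, fun w => add_nonneg (h1 w) (hδeff w), h2, ?_, h4, ?_⟩
    · rw [deg_add', h3, hδdeg]; push_cast; ring
    · have : F - δ = F₁ + F₂ := h5
      funext w
      have := congrFun this w
      simp only [Pi.sub_apply, Pi.add_apply] at *
      omega

/-- Superadditivity at the level of `rankGe`. -/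
lemma rankGe_add (fst snd : E → V) (D D₂ : V → ℤ) (r₁ r₂ : ℕ)
    (h₁ : rankGe fst snd D r₁) (h₂ : rankGe fst snd D₂ r₂) :
    rankGe fst snd (D + D₂) (r₁ + r₂) := by
  intro Ediv hEeff hEdeg
  obtain ⟨E₁, E₂, hE₁, hE₂, hd₁, hd₂, hsum⟩ :=
    split_effective r₁ r₂ Ediv hEeff (by rw [hEdeg]; push_cast; ring)
  obtain ⟨D', hD', f, hf⟩ := h₁ E₁ hE₁ hd₁
  obtain ⟨D₂', hD₂', g, hg⟩ := h₂ E₂ hE₂ hd₂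
  refine ⟨D' + D₂', fun v => add_nonneg (hD' v) (hD₂' v), f + g, ?_⟩
  funext v
  have h1 := congrFun hf v
  have h2 := congrFun hg v
  have h3 := congrFun hsum v
  have hlap : lap fst snd (f + g) v = lap fst snd f v + lap fst snd g v := by
    simp only [lap, Pi.add_apply, ← Finset.sum_add_distrib]
    exact Finset.sum_congr rfl fun w _ => by ring
  simp only [Pi.sub_apply, Pi.add_apply] at *
  omega

/-- The defining set of `divRank`. -/
lemma divRank_set_bddAbove [Nonempty V] (fst snd : E → V) (D : V → ℤ) :
    BddAbove {r : ℤ | r = -1 ∨ (0 ≤ r ∧ rankGe fst snd D r.toNat)} := by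
  refine ⟨max (deg D) (-1), fun r hr => ?_⟩
  rcases hr with h | ⟨h0, hr⟩
  · simp [h]
  · have := rankGe_le_deg fst snd D r.toNat hr
    rw [Int.toNat_of_nonneg h0] at this
    exact le_max_of_le_left this

lemma divRank_mem [Nonempty V] (fst snd : E → V) (D : V → ℤ) :
    divRank fst snd D ∈ {r : ℤ | r = -1 ∨ (0 ≤ r ∧ rankGe fst snd D r.toNat)} :=
  Int.csSup_mem ⟨-1, Or.inl rfl⟩ (divRank_set_bddAbove fst snd D)

/-- rank is superadditive: `r(D + E) ≥ r(D) + r(E)` whenever both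
ranks are non-negative. -/
theorem rank_superadditive
    (fst snd : E → V) (hl : Loopless fst snd) (hc : Connected fst snd)
    (D D₂ : V → ℤ) (hD : 0 ≤ divRank fst snd D) (hD₂ : 0 ≤ divRank fst snd D₂) :
    divRank fst snd D + divRank fst snd D₂ ≤ divRank fst snd (D + D₂) := by
  rcases isEmpty_or_nonempty V with hV | hV
  · -- With no vertices every rank set is unbounded, so every `divRank` is `0`.
    have hall : ∀ A : V → ℤ, divRank fst snd A = 0 := by
      intro A
      have hset : {r : ℤ | r = -1 ∨ (0 ≤ r ∧ rankGe fst snd A r.toNat)}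
          = {r : ℤ | r = -1 ∨ 0 ≤ r} := by
        ext r
        have hge : rankGe fst snd A r.toNat :=
          fun _ _ _ => ⟨0, fun v => hV.elim v, 0, funext fun v => hV.elim v⟩
        simp [Set.mem_setOf_eq, hge]
      have hnb : ¬ BddAbove {r : ℤ | r = -1 ∨ 0 ≤ r} := by
        rintro ⟨b, hb⟩
        have h1 : max b 0 + 1 ≤ b := hb (Or.inr (by positivity))
        have h2 : b ≤ max b 0 := le_max_left _ _
        omega
      rw [divRank, hset, csSup_of_not_bddAbove hnb, Int.csSup_empty]
    simp [hall]
  · have hmem₁ := divRank_mem fst snd D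
    have hmem₂ := divRank_mem fst snd D₂
    rcases hmem₁ with h | ⟨_, hr₁⟩
    · omega
    rcases hmem₂ with h | ⟨_, hr₂⟩
    · omega
    have hsum := rankGe_add fst snd D D₂ _ _ hr₁ hr₂
    have hmem : divRank fst snd D + divRank fst snd D₂ ∈
        {r : ℤ | r = -1 ∨ (0 ≤ r ∧ rankGe fst snd (D + D₂) r.toNat)} := by
      refine Or.inr ⟨by omega, ?_⟩
      rwa [Int.toNat_add hD hD₂]
    exact le_csSup (divRank_set_bddAbove fst snd (D + D₂)) hmem

end ChipFiring
end
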